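/- Multiply robust zero of the drift term: if Δ = E[(μ_Y − μ̄)·(f̄'_{TXM}·f_{TXM})/(f̄_{TXM}·f̄_{TX}) + (μ̄ − μ_Y)·f'_{TXM}/f̄_{TX} + (ω_Y − ω̄)·f'_{TX}/f̄_{TX} + ω̄ − η] (in the notation where bars denote limit nuisances, primes denote evaluation at t', and η = E[ω_Y]), then Δ = 0 under any of the four configurations: (μ̄ = μ_Y and ω̄ = ω_Y), (μ̄ = μ_Y and f̄_{TX} = f_{TX}), (ω̄ = ω_Y and f̄_{TXM} = f_{TXM}), or (f̄_{TX} = f_{TX} and f̄_{TXM} = f_{TXM}). -/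

import Mathlib

/-!
Up to the true cross conditional mean, the drift integrand is a sum of products of nuisance
errors; pointwise,
`integrand + η - ω_Y = (μ_Y - μ̄)·(f̄'_{TXM} f_{TXM} / (f̄_{TXM} f̄_{TX}) - f'_{TXM} / f̄_{TX})
  + (ω_Y - ω̄)·(f'_{TX} / f̄_{TX} - 1)`.
In each configuration one factor of each product vanishes, so `Δ = E[ω_Y(X)] - η = 0`.
-/

open MeasureTheory

/-- The drift integrand before centring, at the values `m = μ_Y`, `mb = μ̄`, `o = ω_Y`,
`ob = ω̄`, `p = f_{T|X,M}(t)`, `p' = f_{T|X,M}(t')`, `q = f_{T|X}(t')` and their barred limits. -/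
noncomputable def robustDrift (m mb o ob p p' pb pb' q qb : ℝ) : ℝ :=
  (m - mb) * (pb' * p) / (pb * qb) + (mb - m) * p' / qb + (o - ob) * q / qb + ob

theorem robustDrift_sub_eq (m mb o ob p p' pb pb' q qb : ℝ) :
    robustDrift m mb o ob p p' pb pb' q qb - o =
      (m - mb) * (pb' * p / (pb * qb) - p' / qb) + (o - ob) * (q / qb - 1) := by
  unfold robustDrift
  ring

theorem robustDrift_eq {m mb o ob p p' pb pb' q qb : ℝ} (hpb : pb ≠ 0) (hqb : qb ≠ 0)
    (h : (mb = m ∧ ob = o) ∨ (mb = m ∧ qb = q) ∨ (ob = o ∧ pb = p ∧ pb' = p') ∨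
      (qb = q ∧ pb = p ∧ pb' = p')) :
    robustDrift m mb o ob p p' pb pb' q qb = o := by
  have hdensity : pb = p → pb' = p' → pb' * p / (pb * qb) - p' / qb = 0 := by
    rintro rfl rfl
    rw [mul_comm pb, mul_div_mul_right _ _ hpb, sub_self]
  rw [← sub_eq_zero, robustDrift_sub_eq]
  rcases h with ⟨rfl, rfl⟩ | ⟨rfl, rfl⟩ | ⟨rfl, hp, hp'⟩ | ⟨rfl, hp, hp'⟩
  · simp
  · simp [hqb]
  · simp [hdensity hp hp']
  · simp [hdensity hp hp', hqb]

theorem integral_sub_integral_eq_zero {Ω : Type*} [MeasurableSpace Ω] (μ : Measure Ω)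
    [IsProbabilityMeasure μ] (f : Ω → ℝ) : ∫ ω, (f ω - ∫ ω', f ω' ∂μ) ∂μ = 0 := by
  simpa only [average_eq_integral] using integral_sub_average μ f

theorem stmt_15_general {Ω : Type*} [MeasurableSpace Ω]
    {Mv Xv : Type*} [MeasurableSpace Mv] [MeasurableSpace Xv]
    (μ : Measure Ω) [IsProbabilityMeasure μ]
    (Mrv : Ω → Mv) (Xrv : Ω → Xv)
    -- true nuisances (at the fixed treatment pair (t,t')) and their limits
    (muY muBar : Mv → Xv → ℝ) (omY omBar : Xv → ℝ)
    (fTXM fTXMbar : ℝ → Mv → Xv → ℝ) (fTX fTXbar : ℝ → Xv → ℝ)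
    (t t' : ℝ)
    -- densities bounded below
    (c : ℝ) (hc : 0 < c)
    (hpos3 : ∀ s m x, c ≤ fTXMbar s m x) (hpos4 : ∀ s x, c ≤ fTXbar s x)
    -- the mediated response is the expectation of the true cross conditional mean
    (η : ℝ) (hη : η = ∫ ω, omY (Xrv ω) ∂μ)
    (Δ : ℝ)
    (hΔ : Δ = ∫ ω,
        ((muY (Mrv ω) (Xrv ω) - muBar (Mrv ω) (Xrv ω))
            * (fTXMbar t' (Mrv ω) (Xrv ω) * fTXM t (Mrv ω) (Xrv ω))
            / (fTXMbar t (Mrv ω) (Xrv ω) * fTXbar t' (Xrv ω))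
          + (muBar (Mrv ω) (Xrv ω) - muY (Mrv ω) (Xrv ω))
            * fTXM t' (Mrv ω) (Xrv ω) / fTXbar t' (Xrv ω)
          + (omY (Xrv ω) - omBar (Xrv ω)) * fTX t' (Xrv ω) / fTXbar t' (Xrv ω)
          + omBar (Xrv ω) - η) ∂μ)
    (hcase : (muBar = muY ∧ omBar = omY) ∨
      (muBar = muY ∧ fTXbar = fTX) ∨
      (omBar = omY ∧ fTXMbar = fTXM) ∨
      (fTXbar = fTX ∧ fTXMbar = fTXM)) :
    Δ = 0 := by
  have hpb : ∀ m x, fTXMbar t m x ≠ 0 := fun m x => (hc.trans_le (hpos3 t m x)).ne'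
  have hqb : ∀ x, fTXbar t' x ≠ 0 := fun x => (hc.trans_le (hpos4 t' x)).ne'
  have hdrift : ∀ ω, robustDrift (muY (Mrv ω) (Xrv ω)) (muBar (Mrv ω) (Xrv ω)) (omY (Xrv ω))
      (omBar (Xrv ω)) (fTXM t (Mrv ω) (Xrv ω)) (fTXM t' (Mrv ω) (Xrv ω))
      (fTXMbar t (Mrv ω) (Xrv ω)) (fTXMbar t' (Mrv ω) (Xrv ω)) (fTX t' (Xrv ω))
      (fTXbar t' (Xrv ω)) = omY (Xrv ω) := by
    intro ω
    refine robustDrift_eq (hpb _ _) (hqb _) ?_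
    rcases hcase with ⟨rfl, rfl⟩ | ⟨rfl, rfl⟩ | ⟨rfl, rfl⟩ | ⟨rfl, rfl⟩ <;> simp
  calc Δ = ∫ ω, (omY (Xrv ω) - ∫ ω', omY (Xrv ω') ∂μ) ∂μ := by
        rw [hΔ, hη]
        congr 1 with ω
        exact congrArg (· - _) (hdrift ω)
    _ = 0 := integral_sub_integral_eq_zero μ (fun ω => omY (Xrv ω))

/-- Multiply robust zero of the drift term: the expectation
`Δ = E[(μ_Y − μ̄)·f̄_{T|X,M}(t'|X,M)·f_{T|X,M}(t|X,M)/(f̄_{T|X,M}(t|X,M)·f̄_{T|X}(t'|X))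
  + (μ̄ − μ_Y)·f_{T|X,M}(t'|X,M)/f̄_{T|X}(t'|X)
  + (ω_Y − ω̄)·f_{T|X}(t'|X)/f̄_{T|X}(t'|X) + ω̄ − η]`
(with `η = E[ω_Y(X)]`) vanishes under any of the four correct-specification
configurations. -/
theorem stmt_15 {Ω : Type*} [MeasurableSpace Ω]
    {Mv Xv : Type*} [MeasurableSpace Mv] [MeasurableSpace Xv]
    (μ : Measure Ω) [IsProbabilityMeasure μ]
    (Mrv : Ω → Mv) (Xrv : Ω → Xv)
    (hMmeas : Measurable Mrv) (hXmeas : Measurable Xrv)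
    -- true nuisances (at the fixed treatment pair (t,t')) and their limits
    (muY muBar : Mv → Xv → ℝ) (omY omBar : Xv → ℝ)
    (fTXM fTXMbar : ℝ → Mv → Xv → ℝ) (fTX fTXbar : ℝ → Xv → ℝ)
    (t t' : ℝ)
    -- densities bounded below
    (c : ℝ) (hc : 0 < c)
    (hpos1 : ∀ s m x, c ≤ fTXM s m x) (hpos2 : ∀ s x, c ≤ fTX s x)
    (hpos3 : ∀ s m x, c ≤ fTXMbar s m x) (hpos4 : ∀ s x, c ≤ fTXbar s x)
    -- boundedness of the nuisance functions
    (Cb : ℝ)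
    (hbd1 : ∀ m x, |muY m x| ≤ Cb) (hbd2 : ∀ m x, |muBar m x| ≤ Cb)
    (hbd3 : ∀ x, |omY x| ≤ Cb) (hbd4 : ∀ x, |omBar x| ≤ Cb)
    (hbd5 : ∀ s m x, fTXM s m x ≤ Cb) (hbd6 : ∀ s x, fTX s x ≤ Cb)
    (hbd7 : ∀ s m x, fTXMbar s m x ≤ Cb) (hbd8 : ∀ s x, fTXbar s x ≤ Cb)
    -- the mediated response is the expectation of the true cross conditional mean
    (η : ℝ) (hη : η = ∫ ω, omY (Xrv ω) ∂μ)
    (Δ : ℝ)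
    (hΔ : Δ = ∫ ω,
        ((muY (Mrv ω) (Xrv ω) - muBar (Mrv ω) (Xrv ω))
            * (fTXMbar t' (Mrv ω) (Xrv ω) * fTXM t (Mrv ω) (Xrv ω))
            / (fTXMbar t (Mrv ω) (Xrv ω) * fTXbar t' (Xrv ω))
          + (muBar (Mrv ω) (Xrv ω) - muY (Mrv ω) (Xrv ω))
            * fTXM t' (Mrv ω) (Xrv ω) / fTXbar t' (Xrv ω)
          + (omY (Xrv ω) - omBar (Xrv ω)) * fTX t' (Xrv ω) / fTXbar t' (Xrv ω)
          + omBar (Xrv ω) - η) ∂μ)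
    (hcase : (muBar = muY ∧ omBar = omY) ∨
      (muBar = muY ∧ fTXbar = fTX) ∨
      (omBar = omY ∧ fTXMbar = fTXM) ∨
      (fTXbar = fTX ∧ fTXMbar = fTXM)) :
    Δ = 0 :=
  stmt_15_general μ Mrv Xrv muY muBar omY omBar fTXM fTXMbar fTX fTXbar t t' c hc hpos3 hpos4 η hη Δ
    hΔ hcase
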